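/- Let n ≥ 2 and 1 ≤ i ≤ n. The map sending I_n + A to I_{n−1} + A_{i,i}, where A_{i,i} is the (n−1)×(n−1) minor of A obtained by deleting the i-th row and i-th column, is a group isomorphism from IGL_{n−1,i} onto the congruence subgroup GL_{n−1}(R_n, σ_iR_n) = {B ∈ GL_{n−1}(R_n) : every entry of B − I_{n−1} lies in σ_iR_n}. -/

import Mathlib

noncomputable section

open Matrix

/-- The Laurent polynomial ring `ℤ[x₁^{±1},…,x_n^{±1}]`, realized as the group
algebra of the free abelian group `ℤⁿ` over `ℤ`. -/
abbrev LaurentR (n : ℕ) : Type := AddMonoidAlgebra ℤ (Fin n →₀ ℤ)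

/-- `x_i` as a unit of `LaurentR n`. -/
def Xu {n : ℕ} (i : Fin n) : (LaurentR n)ˣ where
  val := AddMonoidAlgebra.single (Finsupp.single i 1) 1
  inv := AddMonoidAlgebra.single (-Finsupp.single i 1) 1
  val_inv := by
    rw [AddMonoidAlgebra.single_mul_single]
    simp [AddMonoidAlgebra.one_def]
  inv_val := by
    rw [AddMonoidAlgebra.single_mul_single]
    simp [AddMonoidAlgebra.one_def]

/-- `x_i` as an element of `LaurentR n`. -/
def Xv {n : ℕ} (i : Fin n) : LaurentR n := (Xu i : LaurentR n)

/-- `σ_i = x_i - 1`. -/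
def sg {n : ℕ} (i : Fin n) : LaurentR n := Xv i - 1

/-- The vector `σ⃗`. -/
def sgVec (n : ℕ) : Fin n → LaurentR n := fun i => sg i

/-- `μ_{r,m} = 1 + x_r + ⋯ + x_r^{m-1}`. -/
def muv {n : ℕ} (r : Fin n) (m : ℕ) : LaurentR n := ∑ i ∈ Finset.range m, Xv r ^ i

/-- The augmentation ideal `𝔄_n = Σ σ_i R_n`. -/
def augI (n : ℕ) : Ideal (LaurentR n) := Ideal.span (Set.range (sgVec n))

/-- The ideal `m·R_n`. -/
def OI (n m : ℕ) : Ideal (LaurentR n) := Ideal.span {(m : LaurentR n)}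

/-- The ideal `H_{n,m} = Σ_r (x_r^m − 1)R_n + mR_n`. -/
def HI (n m : ℕ) : Ideal (LaurentR n) :=
  Ideal.span (Set.range (fun r : Fin n => Xv r ^ m - 1) ∪ {(m : LaurentR n)})

/-- `IA_n = {A ∈ GL_n(R_n) : A·σ⃗ = σ⃗}` as a subgroup of `GL_n(R_n)`. -/
def IAn (n : ℕ) : Subgroup (GL (Fin n) (LaurentR n)) where
  carrier := {g | (g : Matrix (Fin n) (Fin n) (LaurentR n)) *ᵥ sgVec n = sgVec n}
  one_mem' := by simp
  mul_mem' := by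
    intro a b ha hb
    simp only [Set.mem_setOf_eq, Units.val_mul] at *
    rw [← Matrix.mulVec_mulVec, hb, ha]
  inv_mem' := by
    intro a ha
    simp only [Set.mem_setOf_eq] at *
    have h : ((a⁻¹ : GL (Fin n) (LaurentR n)) : Matrix (Fin n) (Fin n) (LaurentR n)) *ᵥ
        ((a : Matrix (Fin n) (Fin n) (LaurentR n)) *ᵥ sgVec n) = sgVec n := by
      rw [Matrix.mulVec_mulVec, ← Units.val_mul, inv_mul_cancel, Units.val_one,
        Matrix.one_mulVec]
    rw [ha] at h
    exact h

/-- The underlying matrix of an element of `IA_n`. -/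
def matOf {n : ℕ} (g : IAn n) : Matrix (Fin n) (Fin n) (LaurentR n) :=
  ((g : GL (Fin n) (LaurentR n)) : Matrix (Fin n) (Fin n) (LaurentR n))

/-- The principal congruence subgroup `IG_{n,m}` (as a subset of `IA_n`). -/
def IGnm (n m : ℕ) : Set (IAn n) := {g | ∀ k l, (matOf g - 1) k l ∈ HI n m}

/-- `IA_n^m`: the subgroup of `IA_n` generated by all `m`-th powers. -/
def IApow (n m : ℕ) : Subgroup (IAn n) := Subgroup.closure (Set.range fun g : IAn n => g ^ m)


/-- `ISL_{n−1,i}(H)` for `n = k+1`: elements `I + A` of `IA_n` whose `i`-th row of `A`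
vanishes, all entries of the minor `A_{i,i}` lie in `σ_iR_n ∩ H`, and
`det(I_{n−1} + A_{i,i}) = 1`. -/
def ISL {k : ℕ} (i : Fin (k + 1)) (H : Ideal (LaurentR (k + 1))) : Set (IAn (k + 1)) :=
  {g | (∀ l, (matOf g - 1) i l = 0) ∧
    (∀ a b : Fin k, (matOf g - 1) (i.succAbove a) (i.succAbove b) ∈
      Ideal.span {sg i} ⊓ H) ∧
    ((matOf g).submatrix i.succAbove i.succAbove).det = 1}

/-- `IGL_{n−1,i}` for `n = k+1`: elements `I + A` of `IA_n` whose `i`-th row of `A`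
vanishes and all entries of the minor `A_{i,i}` lie in `σ_iR_n`. -/
def IGLset {k : ℕ} (i : Fin (k + 1)) : Set (IAn (k + 1)) :=
  {g | (∀ l, (matOf g - 1) i l = 0) ∧
    ∀ a b : Fin k, (matOf g - 1) (i.succAbove a) (i.succAbove b) ∈ Ideal.span {sg i}}

/-- The elementary matrix `I_d + r·E_{a,b}` (`a ≠ b`) as an element of `GL_d(A)`. -/
def elemGL {d : ℕ} {A : Type*} [CommRing A] (a b : Fin d) (hab : a ≠ b) (r : A) :
    GL (Fin d) A where
  val := 1 + Matrix.single a b r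
  inv := 1 - Matrix.single a b r
  val_inv := by
    have h2 : Matrix.single a b r * Matrix.single a b r = 0 :=
      by simp [hab.symm]
    rw [mul_sub, mul_one, add_mul, one_mul, h2]
    abel
  inv_val := by
    have h2 : Matrix.single a b r * Matrix.single a b r = 0 :=
      by simp [hab.symm]
    rw [sub_mul, one_mul, mul_add, mul_one, h2]
    abel

/-- `E_d(A)`: the subgroup generated by the elementary matrices. -/
def Egrp (d : ℕ) (A : Type*) [CommRing A] : Subgroup (GL (Fin d) A) :=
  Subgroup.closure {g | ∃ (a b : Fin d) (hab : a ≠ b) (r : A), g = elemGL a b hab r}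

/-- `E_d(A,H)`: the normal closure in `E_d(A)` of the elementary matrices with
parameter in the ideal `H`. -/
def EgrpRel (d : ℕ) (A : Type*) [CommRing A] (H : Ideal A) : Subgroup (GL (Fin d) A) :=
  Subgroup.closure {g | ∃ e ∈ Egrp d A, ∃ (a b : Fin d) (hab : a ≠ b), ∃ r ∈ H,
    g = e * elemGL a b hab r * e⁻¹}

/-- The generic column ideal used in the definitions of `J_{m,u,v}` and `J̃_{m,u,v}`
(with 1-indexed `u ∈ {0,…,n}` and `v` a 0-indexed column, so "`v ≤ u`" reads
`v.val < u`).  `lead` is the leading factor (`𝔄̃_u` resp. `𝔄_n`). -/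
def colIdeal (n m u : ℕ) (lead : Ideal (LaurentR n)) (v : Fin n) : Ideal (LaurentR n) :=
  lead * ((∑ r : Fin n, if r.val < u then augI n * Ideal.span {sg r * muv r m} else 0)
      + augI n * OI n m + OI n m ^ 2)
    + (if v.val < u then
        ∑ r : Fin n, if u ≤ r.val then Ideal.span {sg r ^ 3 * muv r m} else 0
      else
        (∑ r : Fin n, if u ≤ r.val ∧ r ≠ v then Ideal.span {sg r ^ 3 * muv r m} else 0)
          + augI n * Ideal.span {sg v ^ 2 * muv v m})

/-- `𝔄̃_u = Σ_{r=u+1}^n σ_rR_n` (1-indexed `u`). -/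
def augTil (n u : ℕ) : Ideal (LaurentR n) :=
  Ideal.span {x | ∃ r : Fin n, u ≤ r.val ∧ x = sg r}

/-- The ideal `J̃_{m,u,v}`. -/
def Jtil (n m u : ℕ) (v : Fin n) : Ideal (LaurentR n) := colIdeal n m u (augTil n u) v

/-- The ideal `J_{m,u,v}`. -/
def Jfull (n m u : ℕ) (v : Fin n) : Ideal (LaurentR n) := colIdeal n m u (augI n) v

/-- The determinant condition `det = ∏_r x_r^{s_r·m²}`. -/
def detMon (n m : ℕ) (g : IAn n) : Prop :=
  ∃ s : Fin n → ℤ,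
    (matOf g).det = ∏ r : Fin n, ((Xu r ^ (s r * (m : ℤ) ^ 2) : (LaurentR n)ˣ) : LaurentR n)

/-- The set `𝕁̃_{m,u}`. -/
def JmatTil (n m u : ℕ) : Set (IAn n) :=
  {g | (∀ k v, (matOf g - 1) k v ∈ Jtil n m u v) ∧ detMon n m g}

/-- The set `𝕁_{m,u}`. -/
def JmatFull (n m u : ℕ) : Set (IAn n) :=
  {g | (∀ k v, (matOf g - 1) k v ∈ Jfull n m u v) ∧ detMon n m g}

/-- The ideal `J_m = Σ_r σ_r³μ_{r,m}R_n + 𝔄_n²·mR_n + 𝔄_n·m²R_n`. -/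
def JmI (n m : ℕ) : Ideal (LaurentR n) :=
  Ideal.span (Set.range fun r : Fin n => sg r ^ 3 * muv r m)
    + augI n ^ 2 * OI n m + augI n * OI n (m ^ 2)

/-- The free metabelian group `Φ_n = F_n/F_n''`. -/
instance derivedSeries_normal' (G : Type*) [Group G] (n : ℕ) : (derivedSeries G n).Normal :=
  derivedSeries_normal _ _

def Phi (n : ℕ) : Type := FreeGroup (Fin n) ⧸ derivedSeries (FreeGroup (Fin n)) 2

instance (n : ℕ) : Group (Phi n) :=
  inferInstanceAs (Group (FreeGroup (Fin n) ⧸ derivedSeries (FreeGroup (Fin n)) 2))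

/-! An element `M` of `IA_n` whose `i`-th row is `eᵢ` is determined by its minor `B = M_{i,i}`:
in row `a ≠ i`, the equation `M σ⃗ = σ⃗` reads `M_{a,i} σᵢ = σ_a - Σ_b B_{a,b} σ_b`, and `σᵢ` is a
non-zero-divisor. Conversely, if `B - I = σᵢ C`, the same equation can be solved for the `i`-th
column, so every `B ≡ I mod σᵢ` is such a minor. Because the `i`-th row is `eᵢ`, passing to the
minor is multiplicative and preserves the determinant, hence invertibility. -/

section RowMinor

variable {R : Type*} [CommRing R] {k : ℕ} (i : Fin (k + 1))

theorem mul_row_of_row_eq_single {M : Matrix (Fin (k + 1)) (Fin (k + 1)) R}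
    (hM : M i = Pi.single i 1) (N : Matrix (Fin (k + 1)) (Fin (k + 1)) R) :
    (M * N) i = N i := by
  ext j
  simp [mul_apply, hM, Pi.single_apply]

theorem submatrix_succAbove_mul (M : Matrix (Fin (k + 1)) (Fin (k + 1)) R)
    {N : Matrix (Fin (k + 1)) (Fin (k + 1)) R} (hN : N i = Pi.single i 1) :
    (M * N).submatrix i.succAbove i.succAbove =
      M.submatrix i.succAbove i.succAbove * N.submatrix i.succAbove i.succAbove := by
  ext a b
  simp only [submatrix_apply, mul_apply, Fin.sum_univ_succAbove _ i, hN,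
    Pi.single_eq_of_ne (Fin.succAbove_ne i b), mul_zero, zero_add]

theorem submatrix_succAbove_sub_one_apply (M : Matrix (Fin (k + 1)) (Fin (k + 1)) R)
    (a b : Fin k) :
    (M.submatrix i.succAbove i.succAbove - 1) a b = (M - 1) (i.succAbove a) (i.succAbove b) := by
  simp [one_apply, Fin.succAbove_right_injective.eq_iff]

theorem det_eq_det_submatrix_succAbove {M : Matrix (Fin (k + 1)) (Fin (k + 1)) R}
    (hM : M i = Pi.single i 1) : M.det = (M.submatrix i.succAbove i.succAbove).det := by
  simp [det_succ_row M i, hM, Pi.single_apply]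

theorem isUnit_iff_isUnit_submatrix_succAbove {M : Matrix (Fin (k + 1)) (Fin (k + 1)) R}
    (hM : M i = Pi.single i 1) : IsUnit M ↔ IsUnit (M.submatrix i.succAbove i.succAbove) := by
  rw [isUnit_iff_isUnit_det, isUnit_iff_isUnit_det, det_eq_det_submatrix_succAbove i hM]

theorem apply_succAbove_mul_eq_of_mulVec_eq_self {M : Matrix (Fin (k + 1)) (Fin (k + 1)) R}
    {s : Fin (k + 1) → R} (hM : M *ᵥ s = s) (a : Fin k) :
    M (i.succAbove a) i * s i =
      s (i.succAbove a) - ∑ b, M (i.succAbove a) (i.succAbove b) * s (i.succAbove b) := by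
  have h := congrFun hM (i.succAbove a)
  rw [mulVec, dotProduct, Fin.sum_univ_succAbove _ i] at h
  linear_combination h

theorem eq_of_mulVec_eq_self_of_submatrix_eq {s : Fin (k + 1) → R} (hs : IsRightRegular (s i))
    {M N : Matrix (Fin (k + 1)) (Fin (k + 1)) R} (hMs : M *ᵥ s = s) (hNs : N *ᵥ s = s)
    (hM : M i = Pi.single i 1) (hN : N i = Pi.single i 1)
    (h : M.submatrix i.succAbove i.succAbove = N.submatrix i.succAbove i.succAbove) :
    M = N := by
  have hminor : ∀ a b, M (i.succAbove a) (i.succAbove b) = N (i.succAbove a) (i.succAbove b) :=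
    fun a b => congrFun (congrFun h a) b
  ext r c
  rcases eq_or_ne r i with rfl | hr
  · rw [hM, hN]
  obtain ⟨a, rfl⟩ := Fin.exists_succAbove_eq hr
  rcases eq_or_ne c i with rfl | hc
  · apply hs
    simp only [apply_succAbove_mul_eq_of_mulVec_eq_self c hMs,
      apply_succAbove_mul_eq_of_mulVec_eq_self c hNs, hminor]
  obtain ⟨b, rfl⟩ := Fin.exists_succAbove_eq hc
  exact hminor a b

theorem exists_mulVec_eq_self_submatrix_eq (s : Fin (k + 1) → R)
    {B : Matrix (Fin k) (Fin k) R} (hB : ∀ a b, (B - 1) a b ∈ Ideal.span {s i}) :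
    ∃ M : Matrix (Fin (k + 1)) (Fin (k + 1)) R,
      M *ᵥ s = s ∧ M i = Pi.single i 1 ∧ M.submatrix i.succAbove i.succAbove = B := by
  choose C hC using fun a b => Ideal.mem_span_singleton'.mp (hB a b)
  -- `C'` is `C` padded by a zero `i`-th row and column; the last summand below only alters the
  -- `i`-th column and cancels `s i • C' *ᵥ s`.
  let C' : Matrix (Fin (k + 1)) (Fin (k + 1)) R := i.insertNth 0 fun a => i.insertNth 0 (C a)
  have hC'i : C' i = 0 := by simp [C']
  have hC' : ∀ a b, C' (i.succAbove a) (i.succAbove b) = C a b := by simp [C']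
  refine ⟨1 + s i • C' - vecMulVec (C' *ᵥ s) (Pi.single i 1), ?_, ?_, ?_⟩
  · rw [sub_mulVec, add_mulVec, one_mulVec, smul_mulVec, vecMulVec_mulVec, single_one_dotProduct,
      op_smul_eq_smul, add_sub_cancel_right]
  · ext j
    simp [hC'i, vecMulVec, one_eq_pi_single, mulVec]
  · ext a b
    have := hC a b
    simp only [Matrix.sub_apply, one_apply, vecMulVec, submatrix_apply, Matrix.add_apply,
      Fin.succAbove_inj, Matrix.smul_apply, hC', smul_eq_mul, of_apply,
      Pi.single_eq_of_ne (Fin.succAbove_ne i b), mul_zero, sub_zero] at this ⊢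
    linear_combination this

end RowMinor

theorem mul_sub_one_mem {R n : Type*} [CommRing R] [Fintype n] [DecidableEq n] {I : Ideal R}
    {B C : Matrix n n R} (hB : ∀ a b, (B - 1) a b ∈ I) (hC : ∀ a b, (C - 1) a b ∈ I) :
    ∀ a b, (B * C - 1) a b ∈ I := by
  intro a b
  rw [show B * C - 1 = (B - 1) * C + (C - 1) by noncomm_ring, Matrix.add_apply, mul_apply]
  exact add_mem (Ideal.sum_mem _ fun c _ => I.mul_mem_right _ (hB a c)) (hC a b)

theorem isRightRegular_sg {n : ℕ} (i : Fin n) : IsRightRegular (sg i) := by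
  refine (IsRegular.of_ne_zero fun h => ?_).right
  have h1 : (AddMonoidAlgebra.single (Finsupp.single i 1) 1 : LaurentR n) = 1 :=
    sub_eq_zero.mp h
  rw [AddMonoidAlgebra.one_def, AddMonoidAlgebra.single_left_inj one_ne_zero] at h1
  simp at h1

theorem matOf_mul {n : ℕ} (g h : IAn n) : matOf (g * h) = matOf g * matOf h := rfl

theorem matOf_mulVec_sgVec {n : ℕ} (g : IAn n) : matOf g *ᵥ sgVec n = sgVec n := g.2

theorem matOf_injective {n : ℕ} : Function.Injective (matOf (n := n)) :=
  fun _ _ h => Subtype.ext (Units.ext h)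

theorem isUnit_matOf {n : ℕ} (g : IAn n) : IsUnit (matOf g) :=
  (g : GL (Fin n) (LaurentR n)).isUnit

theorem exists_matOf_eq {n : ℕ} {M : Matrix (Fin n) (Fin n) (LaurentR n)} (hM : IsUnit M)
    (hMs : M *ᵥ sgVec n = sgVec n) : ∃ g : IAn n, matOf g = M :=
  ⟨⟨hM.unit, hMs⟩, rfl⟩

theorem mem_IGLset_iff {k : ℕ} (i : Fin (k + 1)) {g : IAn (k + 1)} :
    g ∈ IGLset i ↔ matOf g i = Pi.single i 1 ∧
      ∀ a b, ((matOf g).submatrix i.succAbove i.succAbove - 1) a b ∈ Ideal.span {sg i} := by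
  simp_rw [submatrix_succAbove_sub_one_apply]
  exact and_congr (by simp only [funext_iff, Matrix.sub_apply, sub_eq_zero, one_eq_pi_single])
    Iff.rfl

theorem statement_2_general (k : ℕ) (i : Fin (k + 1)) :
    (∀ g ∈ IGLset i, ∀ h ∈ IGLset i, g * h ∈ IGLset i ∧
        (matOf (g * h)).submatrix i.succAbove i.succAbove =
          (matOf g).submatrix i.succAbove i.succAbove *
            (matOf h).submatrix i.succAbove i.succAbove) ∧
    Set.InjOn (fun g : IAn (k + 1) => (matOf g).submatrix i.succAbove i.succAbove)
      (IGLset i) ∧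
    (fun g : IAn (k + 1) => (matOf g).submatrix i.succAbove i.succAbove) '' (IGLset i) =
      {B : Matrix (Fin k) (Fin k) (LaurentR (k + 1)) |
        IsUnit B ∧ ∀ a b, (B - 1) a b ∈ Ideal.span {sg i}} := by
  refine ⟨fun g hg h hh => ?_, fun g hg h hh hgh => ?_, ?_⟩
  · rw [mem_IGLset_iff] at hg hh
    have hmul := submatrix_succAbove_mul i (matOf g) hh.1
    refine ⟨(mem_IGLset_iff i).2 ⟨?_, ?_⟩, hmul⟩
    · rw [matOf_mul, mul_row_of_row_eq_single i hg.1, hh.1]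
    · rw [matOf_mul, hmul]
      exact mul_sub_one_mem hg.2 hh.2
  · rw [mem_IGLset_iff] at hg hh
    exact matOf_injective <| eq_of_mulVec_eq_self_of_submatrix_eq i (isRightRegular_sg i)
      (matOf_mulVec_sgVec g) (matOf_mulVec_sgVec h) hg.1 hh.1 hgh
  · ext B
    constructor
    · rintro ⟨g, hg, rfl⟩
      rw [mem_IGLset_iff] at hg
      exact ⟨(isUnit_iff_isUnit_submatrix_succAbove i hg.1).1 (isUnit_matOf g), hg.2⟩
    · rintro ⟨hB, hBI⟩
      obtain ⟨M, hMs, hMi, rfl⟩ := exists_mulVec_eq_self_submatrix_eq i (sgVec (k + 1)) hBI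
      obtain ⟨g, rfl⟩ := exists_matOf_eq ((isUnit_iff_isUnit_submatrix_succAbove i hMi).2 hB) hMs
      exact ⟨g, (mem_IGLset_iff i).2 ⟨hMi, hBI⟩, rfl⟩

/-- For `n = k+1 ≥ 2` and `1 ≤ i ≤ n`, the map `I_n + A ↦ I_{n−1} + A_{i,i}`
(deleting the `i`-th row and column) is a group isomorphism from `IGL_{n−1,i}` onto the
congruence subgroup `GL_{n−1}(R_n, σ_iR_n)`: it is multiplicative on `IGL_{n−1,i}` (which is
closed under multiplication), injective on it, and its image is exactly the set of invertible
`(n−1)×(n−1)` matrices `B` with all entries of `B − I` in `σ_iR_n`. -/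
theorem statement_2 (k : ℕ) (hk : 1 ≤ k) (i : Fin (k + 1)) :
    (∀ g ∈ IGLset i, ∀ h ∈ IGLset i, g * h ∈ IGLset i ∧
        (matOf (g * h)).submatrix i.succAbove i.succAbove =
          (matOf g).submatrix i.succAbove i.succAbove *
            (matOf h).submatrix i.succAbove i.succAbove) ∧
    Set.InjOn (fun g : IAn (k + 1) => (matOf g).submatrix i.succAbove i.succAbove)
      (IGLset i) ∧
    (fun g : IAn (k + 1) => (matOf g).submatrix i.succAbove i.succAbove) '' (IGLset i) =
      {B : Matrix (Fin k) (Fin k) (LaurentR (k + 1)) |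
        IsUnit B ∧ ∀ a b, (B - 1) a b ∈ Ideal.span {sg i}} :=
  statement_2_general k i
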